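/- arXiv:2408.00721 — 6 statements merged into one kernel-verified Lean document; each statement's English description precedes it below -/
import Mathlib

section
/- Let (q_n) be an enumeration of the positive rationals and P_n(z) = z^n (z - q_n)^n. Then for every real r > 0 there is a strictly increasing sequence (n_k) with |P_{n_k}(r)| → 0 as k → ∞; hence the sequence (P_n) does not satisfy: there exists r > 0 with min_{|z|=r} |P_n(z)| → +∞. -/
/-!
Infinitely many `q n` lie in `(r - 1/(2r), r)`, and for those `|P_n(r)| = (r |r - q n|)^n ≤ 2^(-n)`.
Since `r` lies on the circle `|z| = r`, the minimum of `|P_n|` there is at most `|P_n(r)|`,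
which along these `n` tends to `0`.
-/

open Filter Set

lemma infinite_setOf_ratCast_mem_Ioo {q : ℕ → ℚ} (hq_surj : ∀ s : ℚ, 0 < s → ∃ n, q n = s)
    {a b : ℝ} (ha : 0 ≤ a) (hab : a < b) : {n | (q n : ℝ) ∈ Ioo a b}.Infinite := by
  obtain ⟨a', ha', ha'b⟩ := exists_rat_btwn hab
  obtain ⟨b', ha'b', hb'⟩ := exists_rat_btwn ha'b
  have hsub : Ioo a' b' ⊆ {s : ℚ | (s : ℝ) ∈ Ioo a b} ∩ range q := by
    intro s ⟨hs₁, hs₂⟩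
    have hs₁' : (a' : ℝ) < s := by exact_mod_cast hs₁
    have hs₂' : (s : ℝ) < b' := by exact_mod_cast hs₂
    refine ⟨⟨ha'.trans hs₁', hs₂'.trans hb'⟩, hq_surj s ?_⟩
    exact_mod_cast ha.trans_lt (ha'.trans hs₁')
  exact ((Ioo_infinite (by exact_mod_cast ha'b')).mono hsub).preimage'

lemma norm_ofReal_pow_mul_sub_pow (r x : ℝ) (n : ℕ) :
    ‖(r : ℂ) ^ n * ((r : ℂ) - (x : ℂ)) ^ n‖ = (|r| * |r - x|) ^ n := by
  rw [norm_mul, norm_pow, norm_pow, ← mul_pow, ← Complex.ofReal_sub, Complex.norm_real,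
    Complex.norm_real, Real.norm_eq_abs, Real.norm_eq_abs]

lemma exists_strictMono_tendsto_norm_zero {q : ℕ → ℚ}
    (hq_surj : ∀ s : ℚ, 0 < s → ∃ n, q n = s) {r : ℝ} (hr : 0 < r) :
    ∃ nk : ℕ → ℕ, StrictMono nk ∧
      Tendsto (fun k : ℕ => ‖(r : ℂ) ^ (nk k) * ((r : ℂ) - (q (nk k) : ℂ)) ^ (nk k)‖)
        atTop (nhds 0) := by
  set a := max 0 (r - 1 / (2 * r))
  have hinf := infinite_setOf_ratCast_mem_Ioo hq_surj (le_max_left 0 _)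
    (max_lt hr (by linarith [one_div_pos.2 (mul_pos two_pos hr)]) : a < r)
  obtain ⟨nk, hmono, hmem⟩ :=
    extraction_of_frequently_atTop (Nat.frequently_atTop_iff_infinite.2 hinf)
  refine ⟨nk, hmono, squeeze_zero (fun _ => norm_nonneg _) (fun k => ?_)
    ((tendsto_pow_atTop_nhds_zero_of_lt_one (by norm_num : (0 : ℝ) ≤ 1 / 2)
      (by norm_num)).comp hmono.tendsto_atTop)⟩
  obtain ⟨hlow, hup⟩ := hmem k
  have hclose : r * |r - q (nk k)| ≤ 1 / 2 := by
    rw [abs_of_pos (sub_pos.2 hup)]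
    have : r - 1 / (2 * r) < q (nk k) := (le_max_right _ _).trans_lt hlow
    have : r * (1 / (2 * r)) = 1 / 2 := by field_simp
    nlinarith
  rw [Function.comp_apply, ← Complex.ofReal_ratCast, norm_ofReal_pow_mul_sub_pow,
    abs_of_pos hr]
  exact pow_le_pow_left₀ (by positivity) hclose _

theorem stmt_4_general (q : ℕ → ℚ)
    (hq_surj : ∀ s : ℚ, 0 < s → ∃ n, q n = s) :
    (∀ r : ℝ, 0 < r → ∃ nk : ℕ → ℕ, StrictMono nk ∧
      Tendsto (fun k : ℕ =>
        ‖(r : ℂ) ^ (nk k) * ((r : ℂ) - (q (nk k) : ℂ)) ^ (nk k)‖)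
        atTop (nhds 0)) ∧
    ¬ ∃ r : ℝ, 0 < r ∧
      Tendsto (fun n : ℕ =>
        sInf ((fun z : ℂ => ‖z ^ n * (z - (q n : ℂ)) ^ n‖) ''
          {z : ℂ | ‖z‖ = r})) atTop atTop := by
  refine ⟨fun r hr => exists_strictMono_tendsto_norm_zero hq_surj hr, ?_⟩
  rintro ⟨r, hr, htend⟩
  obtain ⟨nk, hmono, hzero⟩ := exists_strictMono_tendsto_norm_zero hq_surj hr
  have hle : ∀ n : ℕ, sInf ((fun z : ℂ => ‖z ^ n * (z - (q n : ℂ)) ^ n‖) '' {z : ℂ | ‖z‖ = r})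
      ≤ ‖(r : ℂ) ^ n * ((r : ℂ) - (q n : ℂ)) ^ n‖ := fun n =>
    csInf_le ⟨0, by rintro _ ⟨z, -, rfl⟩; exact norm_nonneg _⟩
      ⟨r, by simp [abs_of_pos hr], rfl⟩
  exact not_tendsto_atTop_of_tendsto_nhds hzero
    (tendsto_atTop_mono (fun k => hle (nk k)) (htend.comp hmono.tendsto_atTop))

/-- If `(q n)` is an enumeration of the positive rationals and
`P_n(z) = z^n * (z - q n)^n`, then for every `r > 0` there is a strictly increasing
sequence `(n k)` with `|P_{n k}(r)| → 0`; hence there is no `r > 0` such that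
`min_{|z| = r} |P_n(z)| → +∞`. -/
theorem stmt_4 (q : ℕ → ℚ) (hq_pos : ∀ n, 0 < q n)
    (hq_surj : ∀ s : ℚ, 0 < s → ∃ n, q n = s) :
    (∀ r : ℝ, 0 < r → ∃ nk : ℕ → ℕ, StrictMono nk ∧
      Tendsto (fun k : ℕ =>
        ‖(r : ℂ) ^ (nk k) * ((r : ℂ) - (q (nk k) : ℂ)) ^ (nk k)‖)
        atTop (nhds 0)) ∧
    ¬ ∃ r : ℝ, 0 < r ∧
      Tendsto (fun n : ℕ =>
        sInf ((fun z : ℂ => ‖z ^ n * (z - (q n : ℂ)) ^ n‖) ''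
          {z : ℂ | ‖z‖ = r})) atTop atTop :=
  stmt_4_general q hq_surj
end

section
/- Let U ⊂ ℂ and let n(r) be the number of points of U in the closed disk of radius r. If limsup_{r→∞} (log n(r))/(log r) > 1, then U is an E-unicity set: every entire function of exponential type vanishing on U is identically zero. -/
/-!
If `f` is entire with `f z ≠ 0` and `S` is a finite set of zeros of `f` in the disk of radius
`r ≥ ‖z‖`, dividing `f` by `∏ a ∈ S, (w - a)` and applying the maximum modulus principle on the
circle of radius `5 r` gives `‖f z‖ * 2 ^ #S ≤ max_{‖w‖ = 5r} ‖f w‖`, since each factor is at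
least `4 r` on that circle and at most `2 r` at `z`. For `f` of exponential type
the right-hand side is `A e^{5Br}`, so the zero-counting function is `O(r)`, and then
`limsup log n(r) / log r ≤ 1`.
-/

open Filter Metric Asymptotics Real

lemma exists_eq_mul_prod_sub_of_forall_eq_zero {f : ℂ → ℂ} (hf : Differentiable ℂ f)
    (S : Finset ℂ) (hS : ∀ a ∈ S, f a = 0) :
    ∃ g : ℂ → ℂ, Differentiable ℂ g ∧ ∀ z, f z = g z * ∏ a ∈ S, (z - a) := by
  induction S using Finset.induction_on generalizing f with
  | empty => exact ⟨f, hf, by simp⟩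
  | @insert a s ha ih =>
    have hfa : f a = 0 := hS a (Finset.mem_insert_self a s)
    have hdslope : Differentiable ℂ (dslope f a) := by
      rw [← differentiableOn_univ] at hf ⊢
      exact (Complex.differentiableOn_dslope univ_mem).mpr hf
    have hs : ∀ b ∈ s, dslope f a b = 0 := by
      intro b hb
      have hba : b ≠ a := fun e => ha (e ▸ hb)
      simp [dslope_of_ne f hba, slope, hfa, hS b (Finset.mem_insert_of_mem hb)]
    obtain ⟨g, hg, hfac⟩ := ih hdslope hs
    refine ⟨g, hg, fun z => ?_⟩
    have hz : (z - a) * dslope f a z = f z := by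
      simpa [hfa] using sub_smul_dslope f a z
    rw [Finset.prod_insert ha, ← hz, hfac z]
    ring

lemma norm_mul_two_pow_card_le {f : ℂ → ℂ} (hf : Differentiable ℂ f) {r M : ℝ} (hr : 0 < r)
    (hM : ∀ w : ℂ, ‖w‖ = 5 * r → ‖f w‖ ≤ M) {S : Finset ℂ} (hS0 : ∀ a ∈ S, f a = 0)
    (hSr : ∀ a ∈ S, ‖a‖ ≤ r) {z : ℂ} (hz : ‖z‖ ≤ r) :
    ‖f z‖ * 2 ^ S.card ≤ M := by
  obtain ⟨g, hg, hfac⟩ := exists_eq_mul_prod_sub_of_forall_eq_zero hf S hS0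
  have hnorm : ∀ w, ‖f w‖ = ‖g w‖ * ∏ a ∈ S, ‖w - a‖ := fun w => by
    rw [hfac w, norm_mul, norm_prod]
  have h4r : 0 < (4 * r) ^ S.card := by positivity
  have hg_sphere : ∀ w ∈ frontier (ball (0 : ℂ) (5 * r)), ‖g w‖ ≤ M / (4 * r) ^ S.card := by
    intro w hw
    rw [frontier_ball 0 (by positivity), mem_sphere_zero_iff_norm] at hw
    have hprod : (4 * r) ^ S.card ≤ ∏ a ∈ S, ‖w - a‖ := by
      rw [← Finset.prod_const]
      refine Finset.prod_le_prod (fun _ _ => by positivity) fun a ha => ?_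
      linarith [norm_sub_norm_le w a, hSr a ha]
    rw [le_div_iff₀ h4r]
    calc ‖g w‖ * (4 * r) ^ S.card ≤ ‖g w‖ * ∏ a ∈ S, ‖w - a‖ := by gcongr
      _ = ‖f w‖ := (hnorm w).symm
      _ ≤ M := hM w hw
  have hgz : ‖g z‖ ≤ M / (4 * r) ^ S.card := by
    refine Complex.norm_le_of_forall_mem_frontier_norm_le isBounded_ball hg.diffContOnCl
      hg_sphere ?_
    rw [closure_ball 0 (by positivity), mem_closedBall_zero_iff]
    linarith
  have hprod : ∏ a ∈ S, ‖z - a‖ ≤ (2 * r) ^ S.card := by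
    rw [← Finset.prod_const]
    refine Finset.prod_le_prod (fun _ _ => norm_nonneg _) fun a ha => ?_
    linarith [norm_sub_le z a, hSr a ha]
  calc ‖f z‖ * 2 ^ S.card
      ≤ M / (4 * r) ^ S.card * (2 * r) ^ S.card * 2 ^ S.card := by
        rw [hnorm z]
        gcongr
        exact (norm_nonneg _).trans hgz
    _ = M := by
        rw [mul_assoc, ← mul_pow, show 2 * r * 2 = 4 * r by ring, div_mul_cancel₀ _ h4r.ne']

lemma ncard_mul_log_two_le {f : ℂ → ℂ} (hf : Differentiable ℂ f) {A B : ℝ}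
    (hbd : ∀ z, ‖f z‖ ≤ A * exp (B * ‖z‖)) {V : Set ℂ} (hV : ∀ a ∈ V, f a = 0) {r : ℝ}
    (hr : 0 < r) (hVr : V ⊆ closedBall 0 r) {z : ℂ} (hz : ‖z‖ ≤ r) (hfz : f z ≠ 0) :
    V.ncard * log 2 ≤ log A - log ‖f z‖ + 5 * B * r := by
  have hM : ∀ w : ℂ, ‖w‖ = 5 * r → ‖f w‖ ≤ A * exp (5 * B * r) := fun w hw => by
    simpa [hw, mul_left_comm, mul_comm] using hbd w
  have hbound : ‖f z‖ * 2 ^ V.ncard ≤ A * exp (5 * B * r) := by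
    obtain hfin | hinf := V.finite_or_infinite
    · rw [Set.ncard_eq_toFinset_card V hfin]
      refine norm_mul_two_pow_card_le hf hr hM (fun a ha => hV a ?_) (fun a ha => ?_) hz
      · exact hfin.mem_toFinset.mp ha
      · simpa using hVr (hfin.mem_toFinset.mp ha)
    · -- `Set.ncard` of an infinite set is `0`
      simpa [hinf.ncard] using
        norm_mul_two_pow_card_le hf hr hM (S := ∅) (by simp) (by simp) hz
  have hfz' : 0 < ‖f z‖ := norm_pos_iff.mpr hfz
  have hA : 0 < A := pos_of_mul_pos_left ((hfz'.trans_le (hbd z))) (exp_pos _).le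
  have hlog := log_le_log (by positivity) hbound
  rw [log_mul hfz'.ne' (by positivity), log_mul hA.ne' (exp_pos _).ne', log_pow,
    log_exp] at hlog
  linarith

lemma isBigO_ncard_inter_closedBall {f : ℂ → ℂ} (hf : Differentiable ℂ f) {A B : ℝ}
    (hbd : ∀ z, ‖f z‖ ≤ A * exp (B * ‖z‖)) {U : Set ℂ} (hU : ∀ a ∈ U, f a = 0) {z : ℂ}
    (hfz : f z ≠ 0) :
    (fun r : ℝ => ((U ∩ closedBall 0 r).ncard : ℝ)) =O[atTop] fun r => r := by
  set K := log A - log ‖f z‖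
  have hlog2 : 0 < log 2 := log_pos one_lt_two
  refine IsBigO.of_bound ((|K| + 5 * |B|) / log 2) ?_
  filter_upwards [eventually_ge_atTop ‖z‖, eventually_ge_atTop 1] with r hrz hr1
  have hcard := ncard_mul_log_two_le hf hbd (fun a ha => hU a ha.1) (by positivity)
    Set.inter_subset_right hrz hfz
  rw [norm_of_nonneg (by positivity), norm_of_nonneg (by positivity), div_mul_eq_mul_div,
    le_div_iff₀ hlog2]
  nlinarith [le_abs_self K, le_abs_self B, abs_nonneg K, abs_nonneg B]

lemma limsup_log_div_log_le {n : ℝ → ℕ} {p : ℝ} (hp : 0 ≤ p)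
    (hn : (fun r => (n r : ℝ)) =O[atTop] fun r => r ^ p) :
    limsup (fun r => log (n r) / log r) atTop ≤ p := by
  obtain ⟨C, hC⟩ := hn.bound
  set C' := max C 1
  have hC' : 0 ≤ log C' := log_nonneg (le_max_right _ _)
  have hlim : Tendsto (fun r => p + log C' * (log r)⁻¹) atTop (nhds p) := by
    simpa using (tendsto_inv_atTop_zero.comp tendsto_log_atTop).const_mul (log C') |>.const_add p
  rw [← hlim.limsup_eq]
  refine limsup_le_limsup ?_ ?_ hlim.isBoundedUnder_le
  · filter_upwards [hC, eventually_gt_atTop 1] with r hr hr1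
    have hlogr : 0 < log r := log_pos hr1
    have hpow : 0 < r ^ p := by positivity
    rw [div_le_iff₀ hlogr, add_mul, inv_mul_cancel_right₀ hlogr.ne']
    rcases (n r).eq_zero_or_pos with h0 | hpos
    · simp only [h0, Nat.cast_zero, log_zero]
      positivity
    · have hle : (n r : ℝ) ≤ C' * r ^ p := by
        rw [Real.norm_natCast, norm_of_nonneg hpow.le] at hr
        exact hr.trans (mul_le_mul_of_nonneg_right (le_max_left _ _) hpow.le)
      calc log (n r) ≤ log (C' * r ^ p) := log_le_log (by exact_mod_cast hpos) hle
        _ = p * log r + log C' := by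
          rw [log_mul (by positivity) hpow.ne', log_rpow (by linarith)]
          ring
  · refine isCoboundedUnder_le_of_eventually_le atTop (x := 0) ?_
    filter_upwards [eventually_ge_atTop 1] with r hr
    exact div_nonneg (log_natCast_nonneg _) (log_nonneg hr)

/-- If `U ⊆ ℂ` and `n(r)` denotes the number of points of `U` in the closed disk of
radius `r`, and `limsup_{r→∞} log n(r) / log r > 1`, then `U` is an `E`-unicity set:
every entire function of exponential type vanishing on `U` is identically zero. -/
theorem stmt_7 (U : Set ℂ)
    (h : 1 < Filter.limsup
      (fun r : ℝ => Real.log ((U ∩ Metric.closedBall 0 r).ncard) / Real.log r) atTop) :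
    ∀ f : ℂ → ℂ, Differentiable ℂ f →
      (∃ A B : ℝ, 0 < A ∧ 0 < B ∧
        ∀ z : ℂ, ‖f z‖ ≤ A * Real.exp (B * ‖z‖)) →
      (∀ z ∈ U, f z = 0) → ∀ z : ℂ, f z = 0 := by
  intro f hf ⟨A, B, _, _, hbd⟩ hU z
  by_contra hfz
  have hO := isBigO_ncard_inter_closedBall hf hbd hU hfz
  have := limsup_log_div_log_le zero_le_one (n := fun r => (U ∩ closedBall 0 r).ncard)
    (by simpa using hO)
  linarith
end

section
/- The set {√n : n ∈ ℕ} ⊂ ℝ ⊂ ℂ is an E-unicity set: every entire function of exponential type vanishing at every √n (n ∈ ℕ) is identically zero. -/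
/-!
The even function `g z = f z * f (-z)` is entire, satisfies `‖g z‖ ≤ C * exp (B * ‖z‖)`, and
vanishes wherever `z ^ 2` is a positive integer, so for every `N` it factors as
`g z = (∏_{n=1}^N (z ^ 2 - n)) * G_N z` with `G_N` entire. On the circle `‖z‖ = 2√N` each factor
has modulus at least `4N - n`, while at a point with `‖w‖ ^ 2 ≤ N` it has modulus at most `2/3` of
that; the maximum modulus principle applied to `G_N` then gives
`‖g w‖ ≤ (2/3) ^ N * exp (2 B √N) * C → 0`. Hence `g = 0`, and `f = 0` because the ring of entire
functions has no zero divisors.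
-/

open Filter Topology Finset

theorem Differentiable.dslope {E : Type*} [NormedAddCommGroup E] [NormedSpace ℂ E]
    [CompleteSpace E] {f : ℂ → E} (hf : Differentiable ℂ f) (a : ℂ) :
    Differentiable ℂ (dslope f a) :=
  differentiableOn_univ.mp <| (Complex.differentiableOn_dslope univ_mem).mpr hf.differentiableOn

theorem eq_sub_mul_dslope {f : ℂ → ℂ} {a : ℂ} (ha : f a = 0) (z : ℂ) :
    f z = (z - a) * dslope f a z := by
  rw [← smul_eq_mul, sub_smul_dslope, ha, sub_zero]

theorem exists_eq_sq_sub_mul {g : ℂ → ℂ} (hg : Differentiable ℂ g) {a : ℂ} (ha : a ≠ 0)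
    (hpos : g a = 0) (hneg : g (-a) = 0) :
    ∃ G : ℂ → ℂ, Differentiable ℂ G ∧ ∀ z, g z = (z ^ 2 - a ^ 2) * G z := by
  have hg₁ := eq_sub_mul_dslope hpos
  have hneg₁ : dslope g a (-a) = 0 := by
    have h2a : -a - a ≠ 0 := by
      rw [← neg_add', neg_ne_zero, ← two_mul]
      exact mul_ne_zero two_ne_zero ha
    simpa [h2a, hneg] using (hg₁ (-a)).symm
  refine ⟨dslope (dslope g a) (-a), (hg.dslope a).dslope (-a), fun z => ?_⟩
  rw [hg₁, eq_sub_mul_dslope hneg₁ z]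
  ring

theorem exists_eq_prod_sq_sub_mul {g : ℂ → ℂ} (hg : Differentiable ℂ g) (s : Finset ℂ)
    (hs : 0 ∉ s) (hzero : ∀ c ∈ s, ∀ z : ℂ, z ^ 2 = c → g z = 0) :
    ∃ G : ℂ → ℂ, Differentiable ℂ G ∧ ∀ z, g z = (∏ c ∈ s, (z ^ 2 - c)) * G z := by
  classical
  induction s using Finset.induction_on with
  | empty => exact ⟨g, hg, by simp⟩
  | insert c s hcs ih =>
    obtain ⟨G, hG, hgG⟩ := ih (fun h => hs (mem_insert_of_mem h))
      (fun c' hc' => hzero c' (mem_insert_of_mem hc'))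
    obtain ⟨a, rfl⟩ := IsAlgClosed.exists_pow_nat_eq c two_pos
    have hG_root : ∀ z : ℂ, z ^ 2 = a ^ 2 → G z = 0 := by
      intro z hz
      have hprod : ∏ c ∈ s, (z ^ 2 - c) ≠ 0 :=
        prod_ne_zero_iff.mpr fun c' hc' => sub_ne_zero.mpr fun h => hcs (hz ▸ h ▸ hc')
      have := hgG z
      rw [hzero _ (mem_insert_self _ _) z hz, eq_comm] at this
      exact (mul_eq_zero.mp this).resolve_left hprod
    have ha : a ≠ 0 := by rintro rfl; exact hs (by simp)
    obtain ⟨H, hH, hGH⟩ := exists_eq_sq_sub_mul hG ha (hG_root a rfl) (hG_root (-a) (neg_sq a))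
    exact ⟨H, hH, fun z => by rw [prod_insert hcs, hgG, hGH]; ring⟩

theorem norm_le_of_forall_norm_eq_le {F : Type*} [NormedAddCommGroup F] [NormedSpace ℂ F]
    {G : ℂ → F} (hG : Differentiable ℂ G) {R K : ℝ} (hK : ∀ x : ℂ, ‖x‖ = R → ‖G x‖ ≤ K)
    {w : ℂ} (hw : ‖w‖ ≤ R) : ‖G w‖ ≤ K := by
  rcases hw.eq_or_lt with hw | hw
  · exact hK w hw
  have hR : R ≠ 0 := (norm_nonneg w |>.trans_lt hw).ne'
  refine Complex.norm_le_of_forall_mem_frontier_norm_le (Metric.isBounded_ball (x := 0) (r := R))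
    hG.diffContOnCl (fun x hx => hK x ?_) ?_
  · simpa [frontier_ball (0 : ℂ) hR] using hx
  · simpa [closure_ball (0 : ℂ) hR] using hw.le

theorem tendsto_pow_mul_exp_mul_sqrt {r : ℝ} (hr₀ : 0 < r) (hr₁ : r < 1) (c : ℝ) :
    Tendsto (fun N : ℕ => r ^ N * Real.exp (c * √N)) atTop (𝓝 0) := by
  set a := -Real.log r
  have ha : 0 < a := neg_pos.mpr (Real.log_neg hr₀ hr₁)
  have hK := (tendsto_pow_atTop_nhds_zero_of_lt_one (Real.exp_nonneg (-a / 2))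
    (Real.exp_lt_one_iff.mpr (by linarith))).const_mul (Real.exp (c ^ 2 / (2 * a)))
  rw [mul_zero] at hK
  refine tendsto_of_tendsto_of_tendsto_of_le_of_le tendsto_const_nhds hK
    (fun N => by positivity) fun N => ?_
  -- `c √N ≤ c² / (2a) + a N / 2` is AM-GM, and `r ^ N = exp (-a N)`.
  have hamgm : c * √N ≤ c ^ 2 / (2 * a) + a * N / 2 := by
    have hsq : √(N : ℝ) ^ 2 = N := Real.sq_sqrt N.cast_nonneg
    rw [div_add_div _ _ (by positivity) two_ne_zero, le_div_iff₀ (by positivity)]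
    nlinarith [sq_nonneg (a * √N - c), congrArg (fun t => a ^ 2 * t) hsq]
  dsimp only
  rw [← Real.exp_log hr₀, ← Real.exp_nat_mul, ← Real.exp_nat_mul, ← Real.exp_add,
    ← Real.exp_add, Real.exp_le_exp]
  linarith

theorem sub_le_norm_sq_sub_natCast (x : ℂ) (n : ℕ) : ‖x‖ ^ 2 - n ≤ ‖x ^ 2 - n‖ := by
  rw [← norm_pow, ← Complex.norm_natCast n]
  exact norm_sub_norm_le _ _

theorem norm_sq_sub_natCast_le (x : ℂ) (n : ℕ) : ‖x ^ 2 - n‖ ≤ ‖x‖ ^ 2 + n := by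
  rw [← norm_pow, ← Complex.norm_natCast n]
  exact norm_sub_le _ _

theorem norm_le_of_eq_prod_sq_sub_mul {g G : ℂ → ℂ} (hG : Differentiable ℂ G) {C B : ℝ}
    (hgC : ∀ z, ‖g z‖ ≤ C * Real.exp (B * ‖z‖)) (N : ℕ)
    (hgG : ∀ z, g z = (∏ n ∈ Icc 1 N, (z ^ 2 - n)) * G z) {w : ℂ} (hw : ‖w‖ ^ 2 ≤ N) :
    ‖g w‖ ≤ (2 / 3) ^ N * Real.exp (2 * B * √N) * C := by
  have hn_le : ∀ n ∈ Icc 1 N, (1 : ℝ) ≤ n ∧ (n : ℝ) ≤ N := fun n hn =>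
    ⟨by exact_mod_cast (mem_Icc.mp hn).1, by exact_mod_cast (mem_Icc.mp hn).2⟩
  set Q := ∏ n ∈ Icc 1 N, (4 * N - n : ℝ)
  have hQ : 0 < Q := prod_pos fun n hn => by linarith [hn_le n hn]
  have hcircle : ∀ x : ℂ, ‖x‖ = 2 * √N → ‖G x‖ ≤ Real.exp (2 * B * √N) * C / Q := by
    intro x hx
    have hx2 : ‖x‖ ^ 2 = 4 * N := by rw [hx, mul_pow, Real.sq_sqrt N.cast_nonneg]; ring
    have hQx : Q ≤ ‖∏ n ∈ Icc 1 N, (x ^ 2 - n)‖ := by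
      rw [norm_prod]
      refine prod_le_prod (fun n hn => by linarith [hn_le n hn]) fun n _ => ?_
      simpa only [hx2] using sub_le_norm_sq_sub_natCast x n
    rw [le_div_iff₀ hQ]
    calc ‖G x‖ * Q ≤ ‖g x‖ := by
          rw [hgG, norm_mul, mul_comm]; gcongr
      _ ≤ Real.exp (2 * B * √N) * C := by
          rw [mul_comm]; convert hgC x using 3; rw [hx]; ring
  have hGw : ‖G w‖ ≤ Real.exp (2 * B * √N) * C / Q := by
    refine norm_le_of_forall_norm_eq_le hG hcircle ?_
    have : ‖w‖ ≤ √N := Real.le_sqrt_of_sq_le hw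
    linarith [Real.sqrt_nonneg N]
  have hPw : ‖∏ n ∈ Icc 1 N, (w ^ 2 - n)‖ ≤ (2 / 3) ^ N * Q := by
    have : (2 / 3 : ℝ) ^ N * Q = ∏ n ∈ Icc 1 N, (2 / 3 * (4 * N - n) : ℝ) := by
      rw [prod_mul_distrib, prod_const, Nat.card_Icc, Nat.add_sub_cancel]
    rw [this, norm_prod]
    refine prod_le_prod (fun n _ => norm_nonneg _) fun n hn => ?_
    linarith [norm_sq_sub_natCast_le w n, hn_le n hn]
  calc ‖g w‖ = ‖∏ n ∈ Icc 1 N, (w ^ 2 - n)‖ * ‖G w‖ := by rw [hgG, norm_mul]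
    _ ≤ (2 / 3) ^ N * Q * (Real.exp (2 * B * √N) * C / Q) := by gcongr
    _ = (2 / 3) ^ N * Real.exp (2 * B * √N) * C := by field_simp

theorem eq_zero_of_forall_sq_eq_natCast {g : ℂ → ℂ} (hg : Differentiable ℂ g) {C B : ℝ}
    (hgC : ∀ z, ‖g z‖ ≤ C * Real.exp (B * ‖z‖))
    (hzero : ∀ n : ℕ, 0 < n → ∀ z : ℂ, z ^ 2 = n → g z = 0) (w : ℂ) : g w = 0 := by
  have hfactor : ∀ N : ℕ, ∃ G : ℂ → ℂ, Differentiable ℂ G ∧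
      ∀ z, g z = (∏ n ∈ Icc 1 N, (z ^ 2 - n)) * G z := by
    intro N
    obtain ⟨G, hG, hgG⟩ := exists_eq_prod_sq_sub_mul hg ((Icc 1 N).image (Nat.cast : ℕ → ℂ))
      (by simp)
      (by simp only [mem_image, mem_Icc]; rintro _ ⟨n, ⟨hn, -⟩, rfl⟩; exact hzero n hn)
    exact ⟨G, hG, fun z => by rw [hgG, prod_image Nat.cast_injective.injOn]⟩
  have hbound : ∀ᶠ N : ℕ in atTop, ‖g w‖ ≤ (2 / 3) ^ N * Real.exp (2 * B * √N) * C := by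
    filter_upwards [eventually_ge_atTop ⌈‖w‖ ^ 2⌉₊] with N hN
    obtain ⟨G, hG, hgG⟩ := hfactor N
    exact norm_le_of_eq_prod_sq_sub_mul hG hgC N hgG (Nat.ceil_le.mp hN)
  have hlim := (tendsto_pow_mul_exp_mul_sqrt (by norm_num : (0 : ℝ) < 2 / 3) (by norm_num)
    (2 * B)).mul_const C
  rw [zero_mul] at hlim
  exact norm_le_zero_iff.mp (ge_of_tendsto hlim hbound)

theorem norm_mul_apply_neg_le {f : ℂ → ℂ} {A B : ℝ}
    (hf : ∀ z, ‖f z‖ ≤ A * Real.exp (B * ‖z‖)) (z : ℂ) :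
    ‖f z * f (-z)‖ ≤ A * A * Real.exp (2 * B * ‖z‖) := by
  have h₁ := hf z
  have h₂ : ‖f (-z)‖ ≤ A * Real.exp (B * ‖z‖) := by simpa using hf (-z)
  rw [norm_mul, show 2 * B * ‖z‖ = B * ‖z‖ + B * ‖z‖ by ring, Real.exp_add]
  calc ‖f z‖ * ‖f (-z)‖ ≤ A * Real.exp (B * ‖z‖) * (A * Real.exp (B * ‖z‖)) :=
        mul_le_mul h₁ h₂ (norm_nonneg _) ((norm_nonneg _).trans h₁)
    _ = A * A * (Real.exp (B * ‖z‖) * Real.exp (B * ‖z‖)) := by ring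

theorem eq_zero_of_mul_apply_neg_eq_zero {f : ℂ → ℂ} (hf : Differentiable ℂ f)
    (h : ∀ z, f z * f (-z) = 0) (z : ℂ) : f z = 0 := by
  have hf_neg : Differentiable ℂ (fun z => f (-z)) := hf.comp differentiable_neg
  rcases AnalyticOnNhd.eq_zero_or_eq_zero_of_mul_eq_zero (U := Set.univ)
    (Complex.analyticOnNhd_univ_iff_differentiable.mpr hf)
    (Complex.analyticOnNhd_univ_iff_differentiable.mpr hf_neg) (fun z _ => h z)
    isPreconnected_univ with h | h
  · exact h z trivial
  · simpa using h (-z) trivial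

/-- The set `{√n : n ∈ ℕ}` is an `E`-unicity set: every entire function of exponential
type vanishing at every `√n` is identically zero. -/
theorem stmt_8 :
    ∀ f : ℂ → ℂ, Differentiable ℂ f →
      (∃ A B : ℝ, 0 < A ∧ 0 < B ∧
        ∀ z : ℂ, ‖f z‖ ≤ A * Real.exp (B * ‖z‖)) →
      (∀ n : ℕ, f ((Real.sqrt n : ℝ) : ℂ) = 0) → ∀ z : ℂ, f z = 0 := by
  rintro f hf ⟨A, B, -, -, hfAB⟩ hvan
  have hvan_sq : ∀ n : ℕ, 0 < n → ∀ z : ℂ, z ^ 2 = n → f z * f (-z) = 0 := by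
    intro n _ z hz
    have hsqrt : ((√n : ℝ) : ℂ) ^ 2 = n := by
      rw [← Complex.ofReal_pow, Real.sq_sqrt n.cast_nonneg, Complex.ofReal_natCast]
    rcases sq_eq_sq_iff_eq_or_eq_neg.mp (hz.trans hsqrt.symm) with rfl | rfl
    · rw [hvan, zero_mul]
    · rw [neg_neg, hvan, mul_zero]
  exact eq_zero_of_mul_apply_neg_eq_zero hf <| eq_zero_of_forall_sq_eq_natCast
    (hf.mul (hf.comp differentiable_neg)) (norm_mul_apply_neg_le hfAB) hvan_sq
end

section
/- If U ⊂ ℂ is an E-unicity set, then the linear span of the exponential functions e_w(z) = e^{wz}, w ∈ U, is dense in the space H(ℂ) of entire functions with the topology of uniform convergence on compact sets. -/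
/-!
If `f` is entire but not in the closed span of the exponentials `e_w`, `w ∈ U`, Hahn–Banach gives
a continuous functional `L` on `C(ℂ, ℂ)` killing every `e_w`, `w ∈ U`, with `L f ≠ 0`. Continuity
bounds `L` by a multiple of the sup norm on a disc of radius `R`, so `F w = L e_w` is an entire
function of exponential type at most `R` vanishing on `U`, hence `F = 0`. Differentiating under
`L`, `F⁽ⁿ⁾ 0 = L (zⁿ)`, so `L` kills all polynomials; these are dense (Taylor partial sums), so
`L f = 0`.
-/

open Filter Topology Asymptotics

theorem mem_closure_span_of_forall_dual {𝕜 E : Type*} [RCLike 𝕜] [AddCommGroup E]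
    [Module ℝ E] [Module 𝕜 E] [IsScalarTower ℝ 𝕜 E] [TopologicalSpace E]
    [IsTopologicalAddGroup E] [ContinuousSMul 𝕜 E] [LocallyConvexSpace ℝ E]
    {S : Set E} {x : E} (h : ∀ L : StrongDual 𝕜 E, (∀ s ∈ S, L s = 0) → L x = 0) :
    x ∈ closure (Submodule.span 𝕜 S : Set E) := by
  have := IsScalarTower.continuousSMul (M := ℝ) (α := E) 𝕜
  set M := Submodule.span 𝕜 S
  by_contra hx
  obtain ⟨L, u, hLM, hLx⟩ := RCLike.geometric_hahn_banach_closed_point (𝕜 := 𝕜)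
    (M.restrictScalars ℝ).convex.closure isClosed_closure hx
  -- `re ∘ L` is bounded above on the subspace `M`, which forces `L = 0` on `M`.
  have hLS : ∀ s ∈ S, L s = 0 := fun s hs => by
    by_contra hs'
    have := hLM _ (subset_closure (M.smul_mem ((u : 𝕜) / L s) (Submodule.subset_span hs)))
    rw [map_smul, smul_eq_mul, div_mul_cancel₀ _ hs', RCLike.ofReal_re] at this
    exact this.false
  have hu : 0 < u := by simpa using hLM 0 (subset_closure M.zero_mem)
  rw [h L hLS, map_zero] at hLx
  exact hu.not_gt hLx

namespace ContinuousMap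

section Dual

variable {X 𝕜 E : Type*} [TopologicalSpace X] [RCLike 𝕜] [NormedAddCommGroup E] [NormedSpace 𝕜 E]

theorem hasBasis_nhds_zero_norm_le :
    (𝓝 (0 : C(X, E))).HasBasis (fun Kε : Set X × ℝ => IsCompact Kε.1 ∧ 0 < Kε.2)
      (fun Kε => {g | ∀ x ∈ Kε.1, ‖g x‖ ≤ Kε.2}) := by
  refine (nhds_basis_uniformity'
    (Metric.uniformity_basis_dist_le.compactConvergenceUniformity (α := X))).congr
    (fun _ => Iff.rfl) fun _ _ => ?_
  ext g
  simp [UniformSpace.ball, dist_zero_left]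

theorem exists_norm_dual_le (L : StrongDual 𝕜 C(X, E)) :
    ∃ K : Set X, IsCompact K ∧ ∃ C > 0, ∀ (g : C(X, E)) (m : ℝ), 0 ≤ m →
      (∀ x ∈ K, ‖g x‖ ≤ m) → ‖L g‖ ≤ C * m := by
  have hL : L ⁻¹' Metric.closedBall 0 1 ∈ 𝓝 0 :=
    L.continuous.tendsto' 0 0 (map_zero L) (Metric.closedBall_mem_nhds 0 one_pos)
  obtain ⟨⟨K, ε⟩, ⟨hK, hε⟩, hKε⟩ := hasBasis_nhds_zero_norm_le.mem_iff.1 hL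
  -- Rescale `g` into the `ε`-neighbourhood; the slack `δ` covers the case `m = 0`.
  refine ⟨K, hK, ε⁻¹, inv_pos.2 hε, fun g m hm hg => le_of_forall_pos_le_add fun δ hδ => ?_⟩
  have hmδ : 0 < m + δ * ε := by positivity
  have hscaled : ‖L (((ε / (m + δ * ε) : ℝ) : 𝕜) • g)‖ ≤ 1 := mem_closedBall_zero_iff.1 <|
      hKε fun x hx => by
    rw [smul_apply, norm_smul, RCLike.norm_ofReal, abs_of_pos (by positivity)]
    calc ε / (m + δ * ε) * ‖g x‖ ≤ ε / (m + δ * ε) * (m + δ * ε) := by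
          gcongr; linarith [hg x hx, mul_pos hδ hε]
      _ = ε := div_mul_cancel₀ _ hmδ.ne'
  rw [map_smul, norm_smul, RCLike.norm_ofReal, abs_of_pos (by positivity), div_mul_eq_mul_div,
    div_le_one hmδ] at hscaled
  calc ‖L g‖ ≤ ε⁻¹ * (m + δ * ε) := by rw [inv_mul_eq_div, le_div_iff₀ hε]; linarith
    _ = ε⁻¹ * m + δ := by field_simp

theorem exists_norm_dual_le_closedBall {V : Type*} [SeminormedAddCommGroup V]
    (L : StrongDual 𝕜 C(V, E)) :
    ∃ R > 0, ∃ C > 0, ∀ (g : C(V, E)) (m : ℝ), 0 ≤ m →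
      (∀ x, ‖x‖ ≤ R → ‖g x‖ ≤ m) → ‖L g‖ ≤ C * m := by
  obtain ⟨K, hK, C, hC, hL⟩ := exists_norm_dual_le L
  obtain ⟨R, hR, hKR⟩ := hK.isBounded.subset_closedBall_lt 0 0
  exact ⟨R, hR, C, hC, fun g m hm hg =>
    hL g m hm fun x hx => hg x (mem_closedBall_zero_iff.1 (hKR hx))⟩

end Dual

noncomputable def powMulExp (n : ℕ) (w : ℂ) : C(ℂ, ℂ) :=
  ⟨fun z => z ^ n * Complex.exp (w * z), by fun_prop⟩

@[simp]
theorem powMulExp_apply (n : ℕ) (w z : ℂ) : powMulExp n w z = z ^ n * Complex.exp (w * z) := rfl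

theorem powMulExp_zero_right (n : ℕ) : powMulExp n 0 = ContinuousMap.id ℂ ^ n := by
  ext z
  simp

theorem norm_powMulExp_le (n : ℕ) (w z : ℂ) :
    ‖powMulExp n w z‖ ≤ ‖z‖ ^ n * Real.exp (‖w‖ * ‖z‖) := by
  rw [powMulExp_apply, norm_mul, norm_pow, ← norm_mul]
  gcongr
  exact Complex.norm_exp_le_exp_norm _

theorem norm_powMulExp_add_sub_le (n : ℕ) (w h z : ℂ) (hhz : ‖h‖ * ‖z‖ ≤ 1) :
    ‖powMulExp n (w + h) z - powMulExp n w z - h * powMulExp (n + 1) w z‖ ≤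
      ‖z‖ ^ (n + 2) * Real.exp (‖w‖ * ‖z‖) * ‖h‖ ^ 2 := by
  have hsplit : powMulExp n (w + h) z - powMulExp n w z - h * powMulExp (n + 1) w z =
      powMulExp n w z * (Complex.exp (h * z) - 1 - h * z) := by
    simp only [powMulExp_apply, add_mul, Complex.exp_add]
    ring
  have hquad := Complex.norm_exp_sub_one_sub_id_le (x := h * z) (by rwa [norm_mul])
  rw [hsplit, norm_mul]
  calc _ ≤ ‖z‖ ^ n * Real.exp (‖w‖ * ‖z‖) * ‖h * z‖ ^ 2 := by
        gcongr
        exact norm_powMulExp_le n w z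
    _ = _ := by rw [norm_mul]; ring

theorem hasDerivAt_dual_powMulExp (L : StrongDual ℂ C(ℂ, ℂ)) (n : ℕ) (w : ℂ) :
    HasDerivAt (fun v => L (powMulExp n v)) (L (powMulExp (n + 1) w)) w := by
  obtain ⟨R, hR, C, hC, hL⟩ := exists_norm_dual_le_closedBall L
  rw [hasDerivAt_iff_isLittleO_nhds_zero]
  refine IsBigO.trans_isLittleO ?_ (isLittleO_pow_id one_lt_two)
  refine IsBigO.of_bound (C * (R ^ (n + 2) * Real.exp (‖w‖ * R))) ?_
  filter_upwards [Metric.closedBall_mem_nhds (0 : ℂ) (inv_pos.2 hR)] with h hh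
  rw [smul_eq_mul, ← smul_eq_mul, ← map_smul, ← map_sub, ← map_sub, norm_pow, mul_assoc]
  refine hL _ _ (by positivity) fun z hz => ?_
  have hhz : ‖h‖ * ‖z‖ ≤ 1 := calc
    ‖h‖ * ‖z‖ ≤ R⁻¹ * R := by gcongr; exact mem_closedBall_zero_iff.1 hh
    _ = 1 := inv_mul_cancel₀ hR.ne'
  calc _ ≤ ‖z‖ ^ (n + 2) * Real.exp (‖w‖ * ‖z‖) * ‖h‖ ^ 2 :=
        norm_powMulExp_add_sub_le n w h z hhz
    _ ≤ _ := by gcongr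

theorem exists_norm_dual_powMulExp_zero_le (L : StrongDual ℂ C(ℂ, ℂ)) :
    ∃ A B : ℝ, 0 < A ∧ 0 < B ∧ ∀ w : ℂ, ‖L (powMulExp 0 w)‖ ≤ A * Real.exp (B * ‖w‖) := by
  obtain ⟨R, hR, C, hC, hL⟩ := exists_norm_dual_le_closedBall L
  refine ⟨C, R, hC, hR, fun w => hL _ _ (Real.exp_pos _).le fun z hz => ?_⟩
  calc ‖powMulExp 0 w z‖ ≤ ‖z‖ ^ 0 * Real.exp (‖w‖ * ‖z‖) := norm_powMulExp_le 0 w z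
    _ ≤ Real.exp (R * ‖w‖) := by rw [pow_zero, one_mul, mul_comm]; gcongr

theorem dual_powMulExp_eq_zero {L : StrongDual ℂ C(ℂ, ℂ)} (hL : ∀ w, L (powMulExp 0 w) = 0)
    (n : ℕ) (w : ℂ) : L (powMulExp n w) = 0 := by
  induction n generalizing w with
  | zero => exact hL w
  | succ n ih =>
    have hconst : (fun v => L (powMulExp n v)) = fun _ => 0 := funext ih
    exact (hasDerivAt_dual_powMulExp L n w).unique (hconst ▸ hasDerivAt_const w 0)

theorem mem_closure_span_pow_id {f : ℂ → ℂ} (hf : Differentiable ℂ f) :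
    (⟨f, hf.continuous⟩ : C(ℂ, ℂ)) ∈
      closure (Submodule.span ℂ (Set.range (ContinuousMap.id ℂ ^ ·)) : Set C(ℂ, ℂ)) := by
  have hp := hf.hasFPowerSeriesOnBall 0 one_pos
  refine mem_closure_of_tendsto (b := atTop) (f := fun N => ∑ k ∈ Finset.range N,
    (cauchyPowerSeries f 0 1).coeff k • ContinuousMap.id ℂ ^ k) ?_ (Eventually.of_forall fun N =>
      Submodule.sum_mem _ fun k _ => Submodule.smul_mem _ _ (Submodule.subset_span ⟨k, rfl⟩))
  rw [tendsto_iff_tendstoLocallyUniformly, ← tendstoLocallyUniformlyOn_univ]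
  convert hp.tendstoLocallyUniformlyOn using 1
  · ext N z
    simp [FormalMultilinearSeries.partialSum, mul_comm]
  · simp
  · simp

end ContinuousMap

/-- If `U ⊆ ℂ` is an `E`-unicity set, then the linear span of the exponentials
`e_w(z) = exp (w z)`, `w ∈ U`, is dense in the space of entire functions with the
topology of uniform convergence on compact sets (realized inside `C(ℂ, ℂ)` with the
compact-open topology). -/
theorem stmt_9 (U : Set ℂ)
    (hU : ∀ f : ℂ → ℂ, Differentiable ℂ f →
      (∃ A B : ℝ, 0 < A ∧ 0 < B ∧
        ∀ z : ℂ, ‖f z‖ ≤ A * Real.exp (B * ‖z‖)) →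
      (∀ z ∈ U, f z = 0) → ∀ z : ℂ, f z = 0) :
    ∀ f : ℂ → ℂ, (hf : Differentiable ℂ f) →
      (⟨f, hf.continuous⟩ : C(ℂ, ℂ)) ∈
        closure (Submodule.span ℂ
          {g : C(ℂ, ℂ) | ∃ w ∈ U, g = ⟨fun z => Complex.exp (w * z),
            (Complex.continuous_exp.comp (continuous_const.mul continuous_id))⟩} :
          Set C(ℂ, ℂ)) := by
  intro f hf
  refine mem_closure_span_of_forall_dual fun L hL => ?_
  have hexp : ∀ w, L (ContinuousMap.powMulExp 0 w) = 0 := by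
    obtain ⟨A, B, hA, hB, hbound⟩ := ContinuousMap.exists_norm_dual_powMulExp_zero_le L
    refine hU _ (fun w => (ContinuousMap.hasDerivAt_dual_powMulExp L 0 w).differentiableAt)
      ⟨A, B, hA, hB, hbound⟩ fun w hw => hL _ ⟨w, hw, ?_⟩
    ext z
    simp
  have hpow : ∀ n, L (ContinuousMap.id ℂ ^ n) = 0 := fun n =>
    ContinuousMap.powMulExp_zero_right n ▸ ContinuousMap.dual_powMulExp_eq_zero hexp n 0
  exact closure_minimal (Submodule.span_le.2 (Set.range_subset_iff.2 hpow)) L.isClosed_ker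
    (ContinuousMap.mem_closure_span_pow_id hf)
end

section
/- Let X be a metrizable separable topological vector space and A, B ⊂ X with: A + B ⊂ A; A ∩ B = ∅; A ∪ {0} contains a vector subspace M with dim(M) = dim(X); and B ∪ {0} contains a dense vector subspace. Then A ∪ {0} contains a dense vector subspace of dimension dim(X). -/
/-!
`M ∩ N = 0` because `A ∩ B = ∅`, and every `m + n` with `0 ≠ m ∈ M`, `n ∈ N` lies in `A`.
So it suffices to find a dense subspace `L ≤ M ⊔ N` of dimension `dim M` with `L ∩ N = 0`.
When `dim M` is infinite, take `L = {m + T m}` for a linear map `T : M → N` that sends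
tiny multiples `cₙ eₙ` of countably many basis vectors of `M` to the terms of a dense sequence
of `N`, each term hit infinitely often; then `L` accumulates at every term of the sequence.
When `dim M` is finite, `M = X`.
-/

open Set Filter Topology Cardinal TopologicalSpace

namespace LinearMap

variable {R V : Type*} [Ring R] [AddCommGroup V] [Module R V] {M N : Submodule R V}

def addGraph (T : M →ₗ[R] N) : Submodule R V :=
  range (M.subtype + N.subtype ∘ₗ T)

variable (T : M →ₗ[R] N)

theorem add_mem_addGraph (m : M) : (m : V) + T m ∈ T.addGraph :=
  ⟨m, rfl⟩

theorem addGraph_le_sup : T.addGraph ≤ M ⊔ N := by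
  rintro _ ⟨m, rfl⟩
  exact Submodule.add_mem_sup m.2 (T m).2

theorem eq_zero_of_add_apply_mem (hMN : Disjoint M N) {m : M} (h : (m : V) + T m ∈ N) : m = 0 :=
  Subtype.ext <| Submodule.disjoint_def.mp hMN m m.2 (by simpa using N.sub_mem h (T m).2)

theorem disjoint_addGraph (hMN : Disjoint M N) : Disjoint T.addGraph N := by
  refine Submodule.disjoint_def.mpr ?_
  rintro _ ⟨m, rfl⟩ hm
  simp [T.eq_zero_of_add_apply_mem hMN hm]

theorem rank_addGraph [StrongRankCondition R] (hMN : Disjoint M N) :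
    Module.rank R T.addGraph = Module.rank R M := by
  refine rank_range_of_injective _ <| (injective_iff_map_eq_zero _).mpr fun m hm ↦ ?_
  exact T.eq_zero_of_add_apply_mem hMN (by rw [show (m : V) + T m = 0 from hm]; exact N.zero_mem)

end LinearMap

theorem subset_union_zero_of_le_sup {R V : Type*} [Ring R] [AddCommGroup V] [Module R V]
    {A B : Set V} (hAB : ∀ a ∈ A, ∀ b ∈ B, a + b ∈ A) {M N L : Submodule R V}
    (hM : (M : Set V) ⊆ A ∪ {0}) (hN : (N : Set V) ⊆ B ∪ {0}) (hLMN : L ≤ M ⊔ N)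
    (hLN : Disjoint L N) : (L : Set V) ⊆ A ∪ {0} := by
  intro x hxL
  obtain ⟨m, hmM, n, hnN, rfl⟩ := Submodule.mem_sup.mp (hLMN hxL)
  by_cases hm : m = 0
  · subst hm
    simp [Submodule.disjoint_def.mp hLN n (by simpa using hxL) hnN]
  have hmA : m ∈ A := (hM hmM).resolve_right hm
  rcases hN hnN with hnB | rfl
  · exact Or.inl (hAB m hmA n hnB)
  · exact Or.inl (by simpa using hmA)

theorem disjoint_of_subset_union_zero {R V : Type*} [Ring R] [AddCommGroup V] [Module R V]
    {A B : Set V} (hAB : A ∩ B = ∅) {M N : Submodule R V}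
    (hM : (M : Set V) ⊆ A ∪ {0}) (hN : (N : Set V) ⊆ B ∪ {0}) : Disjoint M N := by
  refine Submodule.disjoint_def.mpr fun x hxM hxN ↦ ?_
  by_contra hx
  have : x ∈ A ∩ B := ⟨(hM hxM).resolve_right hx, (hN hxN).resolve_right hx⟩
  simp [hAB] at this

theorem exists_ne_zero_smul_tendsto_zero (𝕜 : Type*) {X : Type*} [NontriviallyNormedField 𝕜]
    [AddCommGroup X] [Module 𝕜 X] [TopologicalSpace X] [ContinuousSMul 𝕜 X]
    [FirstCountableTopology X] (v : ℕ → X) :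
    ∃ c : ℕ → 𝕜, (∀ n, c n ≠ 0) ∧ Tendsto (fun n ↦ c n • v n) atTop (𝓝 0) := by
  obtain ⟨U, hU⟩ := (𝓝 (0 : X)).exists_antitone_basis
  have hsmall : ∀ n, ∃ c : 𝕜, c • v n ∈ U n ∧ c ≠ 0 := fun n ↦ by
    have : Tendsto (fun c : 𝕜 ↦ c • v n) (𝓝[≠] 0) (𝓝 0) :=
      ((continuous_id.smul continuous_const).tendsto' 0 0 (zero_smul _ _)).mono_left
        nhdsWithin_le_nhds
    exact ((this.eventually (hU.mem n)).and self_mem_nhdsWithin).exists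
  choose c hcU hc0 using hsmall
  exact ⟨c, hc0, hU.tendsto hcU⟩

theorem dense_of_tendsto_zero_add_mem {X : Type*} [AddMonoid X] [TopologicalSpace X]
    [ContinuousAdd X] {s : Set X} {y u : ℕ → X} (hy : DenseRange y)
    (hu : Tendsto u atTop (𝓝 0)) (hs : ∀ k m, u (Nat.pair k m) + y k ∈ s) : Dense s := by
  refine Dense.of_closure <| hy.mono <| range_subset_iff.mpr fun k ↦
    mem_closure_of_tendsto (b := atTop) ?_ (Eventually.of_forall (hs k))
  have hpair : Tendsto (Nat.pair k) atTop atTop :=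
    tendsto_atTop_mono (Nat.right_le_pair k) tendsto_id
  simpa using (hu.comp hpair).add_const (y k)

theorem Submodule.exists_dense_le_sup_disjoint {𝕜 X : Type*} [NontriviallyNormedField 𝕜]
    [AddCommGroup X] [Module 𝕜 X] [TopologicalSpace X] [ContinuousAdd X] [ContinuousSMul 𝕜 X]
    [SecondCountableTopology X] {M N : Submodule 𝕜 X} (hMN : Disjoint M N)
    (hN : Dense (N : Set X)) (hM : ℵ₀ ≤ Module.rank 𝕜 M) :
    ∃ L : Submodule 𝕜 X, Dense (L : Set X) ∧ Module.rank 𝕜 L = Module.rank 𝕜 M ∧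
      L ≤ M ⊔ N ∧ Disjoint L N := by
  obtain ⟨y, hy⟩ := exists_dense_seq (N : Set X)
  let b := Module.Basis.ofVectorSpace 𝕜 M
  have : Infinite (Module.Basis.ofVectorSpaceIndex 𝕜 M) :=
    Cardinal.infinite_iff.mpr (b.mk_eq_rank''.symm ▸ hM)
  let f := Infinite.natEmbedding (Module.Basis.ofVectorSpaceIndex 𝕜 M)
  obtain ⟨c, hc0, hc⟩ := exists_ne_zero_smul_tendsto_zero 𝕜 fun n ↦ (b (f n) : X)
  -- `T` sends `c n • b (f n)` to the `k`-th point of the dense sequence whenever `n = pair k m`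
  let T : M →ₗ[𝕜] N :=
    b.constr 𝕜 (Function.extend f (fun n ↦ (c n)⁻¹ • y n.unpair.1) 0)
  refine ⟨T.addGraph, ?_, T.rank_addGraph hMN, T.addGraph_le_sup, T.disjoint_addGraph hMN⟩
  refine dense_of_tendsto_zero_add_mem (hN.denseRange_val.comp hy continuous_subtype_val) hc
    fun k m ↦ ?_
  convert T.add_mem_addGraph (c (Nat.pair k m) • b (f (Nat.pair k m))) using 2
  simp [T, f.injective.extend_apply, smul_smul, hc0]

/-- If `X` is a metrizable separable topological vector space, `A + B ⊆ A`,
`A ∩ B = ∅`, `A ∪ {0}` contains a subspace of full dimension, and `B ∪ {0}` contains a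
dense subspace, then `A ∪ {0}` contains a dense subspace of full dimension
(i.e. `A` is maximal dense-lineable). -/
theorem stmt_10 {𝕜 X : Type*} [NontriviallyNormedField 𝕜] [AddCommGroup X] [Module 𝕜 X]
    [TopologicalSpace X] [IsTopologicalAddGroup X] [ContinuousSMul 𝕜 X]
    [TopologicalSpace.MetrizableSpace X] [TopologicalSpace.SeparableSpace X]
    (A B : Set X)
    (hAB : ∀ a ∈ A, ∀ b ∈ B, a + b ∈ A)
    (hdisj : A ∩ B = ∅)
    (hA : ∃ M : Submodule 𝕜 X, Module.rank 𝕜 M = Module.rank 𝕜 X ∧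
      (M : Set X) ⊆ A ∪ {0})
    (hB : ∃ N : Submodule 𝕜 X, Dense (N : Set X) ∧ (N : Set X) ⊆ B ∪ {0}) :
    ∃ M : Submodule 𝕜 X, Dense (M : Set X) ∧ Module.rank 𝕜 M = Module.rank 𝕜 X ∧
      (M : Set X) ⊆ A ∪ {0} := by
  obtain ⟨M, hMX, hMA⟩ := hA
  obtain ⟨N, hNd, hNB⟩ := hB
  rcases lt_or_ge (Module.rank 𝕜 M) ℵ₀ with hfin | hinf
  · have : Module.Finite 𝕜 X := Module.rank_lt_aleph0_iff.mp (hMX ▸ hfin)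
    have hMtop : M = ⊤ := Submodule.eq_top_of_finrank_eq (by simp [Module.finrank, hMX])
    exact ⟨M, by simp [hMtop], hMX, hMA⟩
  have : SecondCountableTopology X := by let := metrizableSpaceMetric X; infer_instance
  have hMN := disjoint_of_subset_union_zero hdisj hMA hNB
  obtain ⟨L, hLd, hLM, hLMN, hLN⟩ := Submodule.exists_dense_le_sup_disjoint hMN hNd hinf
  exact ⟨L, hLd, hLM.trans hMX, subset_union_zero_of_le_sup hAB hMA hNB hLMN hLN⟩
end

section
/- If (m(n)) is a sequence of natural numbers with m(n) → ∞ and (c_n) are nonzero complex numbers such that m(n)·|c_n|^{p/m(n)} → ∞ for some fixed p ≥ 1, then (|c_n|^{p} · m(n)!)^{1/m(n)} → +∞ as n → ∞. -/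
/-!
The term `n^n / n!` of the exponential series is at most `e^n`, so `(m!)^{1/m} ≥ m / e`.
Hence `(|c|^p m!)^{1/m} = |c|^{p/m} (m!)^{1/m} ≥ m |c|^{p/m} / e`, which tends to `∞` by assumption.
-/

open Filter Real Nat

theorem div_exp_one_pow_le_factorial (n : ℕ) : ((n : ℝ) / exp 1) ^ n ≤ n ! := by
  have h := Real.pow_div_factorial_le_exp (n : ℝ) n.cast_nonneg n
  rw [div_le_iff₀ (by positivity), ← exp_one_pow, mul_comm] at h
  rwa [div_pow, div_le_iff₀ (by positivity)]

theorem div_exp_one_le_factorial_rpow (n : ℕ) : (n : ℝ) / exp 1 ≤ (n ! : ℝ) ^ ((1 : ℝ) / n) := by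
  rcases eq_or_ne n 0 with rfl | hn
  · simp
  calc (n : ℝ) / exp 1 = (((n : ℝ) / exp 1) ^ n) ^ ((1 : ℝ) / n) := by
        rw [← rpow_natCast, ← rpow_mul (by positivity), mul_one_div_cancel (by positivity),
          rpow_one]
    _ ≤ (n ! : ℝ) ^ ((1 : ℝ) / n) :=
        rpow_le_rpow (by positivity) (div_exp_one_pow_le_factorial n) (by positivity)

theorem mul_rpow_div_div_exp_one_le {a : ℝ} (ha : 0 ≤ a) (p : ℝ) (n : ℕ) :
    n * a ^ (p / n) / exp 1 ≤ (a ^ p * n !) ^ ((1 : ℝ) / n) := by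
  rw [mul_rpow (by positivity) (by positivity), ← rpow_mul ha, mul_one_div, mul_comm,
    mul_div_assoc]
  exact mul_le_mul_of_nonneg_left (div_exp_one_le_factorial_rpow n) (by positivity)

theorem stmt_19_general (m : ℕ → ℕ) (c : ℕ → ℂ) (p : ℕ)
    (h : Tendsto (fun n : ℕ =>
      (m n : ℝ) * ‖c n‖ ^ ((p : ℝ) / (m n : ℝ))) atTop atTop) :
    Tendsto (fun n : ℕ =>
      (‖c n‖ ^ (p : ℝ) * ((m n).factorial : ℝ)) ^ ((1 : ℝ) / (m n : ℝ)))
      atTop atTop :=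
  tendsto_atTop_mono (fun n => mul_rpow_div_div_exp_one_le (norm_nonneg (c n)) p (m n))
    (h.atTop_div_const (exp_pos 1))

/-- If `m n → ∞`, the `c n` are nonzero, `p ≥ 1`, and
`m n * |c n| ^ (p / m n) → ∞`, then `(|c n| ^ p * (m n)!) ^ (1 / m n) → +∞`. -/
theorem stmt_19 (m : ℕ → ℕ) (c : ℕ → ℂ) (p : ℕ) (hp : 1 ≤ p)
    (hm : Tendsto m atTop atTop) (hc : ∀ n, c n ≠ 0)
    (h : Tendsto (fun n : ℕ =>
      (m n : ℝ) * ‖c n‖ ^ ((p : ℝ) / (m n : ℝ))) atTop atTop) :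
    Tendsto (fun n : ℕ =>
      (‖c n‖ ^ (p : ℝ) * ((m n).factorial : ℝ)) ^ ((1 : ℝ) / (m n : ℝ)))
      atTop atTop :=
  stmt_19_general m c p h
end
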